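/- arXiv:1205.2119 — 2 statements merged into one kernel-verified Lean document; each statement's English description precedes it below -/
import Mathlib

section
/- Let k be a field, R = k, S = k[[X]], R̃ = k[[X]], S̃ = k[[X]]/(X²), with φ : k → k[[X]] the inclusion, α : k → k[[X]] the inclusion, β : k[[X]] → k[[X]]/(X²) the quotient map, and φ̃ : k[[X]] → k[[X]]/(X²) the quotient map. Then the square commutes, α is weakly regular, and fd_R̃(S̃) = 1 < 2 = edim(α) + fd_S(S̃) + fd_R(S); i.e., the inequality fd(φ̃) ≤ edim(α) + fd(β) + fd(φ) can be strict. -/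
open IsLocalRing

universe u

/-- The minimal number of generators of an ideal. -/
noncomputable def minGens {A : Type u} [CommRing A] (I : Ideal A) : ℕ :=
  sInf {n : ℕ | ∃ s : Finset A, s.card = n ∧ Ideal.span (s : Set A) = I}

/-- Embedding dimension of a local ring: minimal number of generators of the maximal ideal. -/
noncomputable def edim (A : Type u) [CommRing A] [IsLocalRing A] : ℕ :=
  minGens (IsLocalRing.maximalIdeal A)

/-- A regular local ring: Noetherian local with Krull dimension equal to embedding dimension. -/
def IsRegularLocalRing' (A : Type u) [CommRing A] : Prop :=
  ∃ _ : IsLocalRing A, IsNoetherianRing A ∧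
    ringKrullDim A = (minGens (IsLocalRing.maximalIdeal A) : WithBot (WithTop ℕ))

/-- `pdLE R n M` : the projective dimension of `M` over `R` is at most `n`
(via vanishing of the `n`-th syzygy in the canonical free resolution). -/
def pdLE (R : Type u) [CommRing R] : ℕ → ∀ (M : Type u) [AddCommGroup M] [Module R M], Prop
  | 0, M, _, _ => Module.Projective R M
  | n+1, M, _, _ => pdLE R n ↥(LinearMap.ker (Finsupp.linearCombination R (id : M → M)))

/-- Projective dimension, valued in `ℕ∞`. -/
noncomputable def pdim (R : Type u) [CommRing R] (M : Type u) [AddCommGroup M] [Module R M] :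
    ℕ∞ :=
  sInf {n : ℕ∞ | ∃ k : ℕ, (k : ℕ∞) = n ∧ pdLE R k M}

/-- `fdLE R n M` : the flat dimension of `M` over `R` is at most `n`. -/
def fdLE (R : Type u) [CommRing R] : ℕ → ∀ (M : Type u) [AddCommGroup M] [Module R M], Prop
  | 0, M, _, _ => Module.Flat R M
  | n+1, M, _, _ => fdLE R n ↥(LinearMap.ker (Finsupp.linearCombination R (id : M → M)))

/-- Flat dimension, valued in `ℕ∞`. -/
noncomputable def fdim (R : Type u) [CommRing R] (M : Type u) [AddCommGroup M] [Module R M] :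
    ℕ∞ :=
  sInf {n : ℕ∞ | ∃ k : ℕ, (k : ℕ∞) = n ∧ fdLE R k M}

/-! `k⟦X⟧` is a discrete valuation ring, hence a regular local ring whose Krull dimension and
embedding dimension are both `1`. It is also a principal ideal domain, over which every submodule
of a free module is torsion-free and hence flat, so every module has flat dimension at most `1`.
The quotient `k⟦X⟧ ⧸ (X²)` is not flat, because the nonzerodivisor `X²` kills its nonzero element
`1`; so its flat dimension is exactly `1`, while `k⟦X⟧` is flat over the field `k`. The
inequality thus reads `1 < 1 + 1 + 0`. -/

open PowerSeries

lemma minGens_eq_spanFinrank {A : Type u} [CommRing A] (I : Ideal A) :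
    minGens I = I.spanFinrank := by
  rw [minGens, Submodule.spanFinrank_eq_iInf, iInf]
  congr 1
  ext n
  simp only [Set.mem_ofPred_eq, Set.mem_range, Subtype.exists, Ideal.span, exists_prop]
  exact exists_congr fun s => ⟨fun ⟨h1, h2⟩ => ⟨h2, h1⟩, fun ⟨h1, h2⟩ => ⟨h2, h1⟩⟩

lemma isRegularLocalRing'_iff (A : Type u) [CommRing A] :
    IsRegularLocalRing' A ↔ IsRegularLocalRing A := by
  constructor
  · rintro ⟨_, _, hdim⟩
    exact (isRegularLocalRing_iff A).mpr (by rw [hdim, minGens_eq_spanFinrank]; rfl)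
  · intro h
    exact ⟨inferInstance, inferInstance, by
      rw [minGens_eq_spanFinrank]; exact IsRegularLocalRing.spanFinrank_maximalIdeal.symm⟩

lemma edim_eq_ringKrullDim (A : Type u) [CommRing A] [IsRegularLocalRing A] :
    (edim A : WithBot ℕ∞) = ringKrullDim A := by
  rw [edim, minGens_eq_spanFinrank, IsRegularLocalRing.spanFinrank_maximalIdeal]

lemma edim_powerSeries (k : Type u) [Field k] : edim (PowerSeries k) = 1 := by
  have h := edim_eq_ringKrullDim (PowerSeries k)
  rw [IsDiscreteValuationRing.ringKrullDim_eq_one] at h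
  exact_mod_cast h

section FlatDimension

variable {R : Type u} [CommRing R] {M : Type u} [AddCommGroup M] [Module R M]

lemma fdim_eq_zero_of_flat [Module.Flat R M] : fdim R M = 0 :=
  nonpos_iff_eq_zero.mp (sInf_le ⟨0, rfl, ‹Module.Flat R M›⟩)

lemma fdim_eq_one (h1 : fdLE R 1 M) (h0 : ¬ Module.Flat R M) : fdim R M = 1 := by
  refine le_antisymm (sInf_le ⟨1, rfl, h1⟩) (le_sInf ?_)
  rintro _ ⟨(_ | j), rfl, hj⟩
  · exact absurd hj h0
  · exact_mod_cast Nat.succ_le_succ (Nat.zero_le j)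

lemma fdLE_one_of_isPrincipalIdealRing [IsDomain R] [IsPrincipalIdealRing R] :
    fdLE R 1 M :=
  -- instance search misses this: the submodule's `AddCommMonoid` is not syntactically the one
  -- coming from its `AddCommGroup`
  @Module.Flat.instOfIsDedekindDomainOfIsTorsionFree R
    (LinearMap.ker (Finsupp.linearCombination R (id : M → M))) _ _ _ inferInstance inferInstance

end FlatDimension

lemma not_flat_quotient_of_ne_bot_of_ne_top {R : Type u} [CommRing R] [IsDomain R] {I : Ideal R}
    (hbot : I ≠ ⊥) (htop : I ≠ ⊤) : ¬ Module.Flat R (R ⧸ I) := by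
  intro _
  obtain ⟨a, haI, ha⟩ := Submodule.exists_mem_ne_zero_of_ne_bot hbot
  have hreg : IsSMulRegular (R ⧸ I) a :=
    Module.Flat.isSMulRegular_of_nonZeroDivisors (mem_nonZeroDivisors_of_ne_zero ha)
  have hone : (1 : R ⧸ I) = 0 := hreg (by
    simpa [Algebra.smul_def] using Ideal.Quotient.eq_zero_iff_mem.mpr haI)
  exact htop (Ideal.Quotient.zero_eq_one_iff.mp hone.symm)

lemma fdim_quotient_span_X_sq (k : Type u) [Field k] :
    fdim (PowerSeries k) (PowerSeries k ⧸ Ideal.span {(X : PowerSeries k) ^ 2}) = 1 := by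
  refine fdim_eq_one fdLE_one_of_isPrincipalIdealRing
    (not_flat_quotient_of_ne_bot_of_ne_top ?_ ?_)
  · simp [X_ne_zero]
  · simpa [Ideal.span_singleton_eq_top] using X_prime.not_isUnit

/-- the example `k → k[[X]] → k[[X]]/(X²)`: the inequality
`fd(φ̃) ≤ edim(α) + fd(β) + fd(φ)` can be strict. -/
theorem stmt11 (k : Type u) [Field k] :
    ((Ideal.Quotient.mk (Ideal.span {(PowerSeries.X : PowerSeries k) ^ 2})).comp
        (algebraMap k (PowerSeries k)) =
      algebraMap k (PowerSeries k ⧸ Ideal.span {(PowerSeries.X : PowerSeries k) ^ 2})) ∧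
    Module.Flat k (PowerSeries k) ∧
    IsRegularLocalRing' (PowerSeries k) ∧
    fdim (PowerSeries k)
      (PowerSeries k ⧸ Ideal.span {(PowerSeries.X : PowerSeries k) ^ 2}) = 1 ∧
    fdim k (PowerSeries k) = 0 ∧
    edim (PowerSeries k) = 1 ∧
    ((1 : ℕ∞) < 2) ∧
    fdim (PowerSeries k)
        (PowerSeries k ⧸ Ideal.span {(PowerSeries.X : PowerSeries k) ^ 2}) <
      (edim (PowerSeries k) : ℕ∞) +
        fdim (PowerSeries k)
          (PowerSeries k ⧸ Ideal.span {(PowerSeries.X : PowerSeries k) ^ 2}) +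
        fdim k (PowerSeries k) := by
  have hfdQ := fdim_quotient_span_X_sq k
  have hfdk : fdim k (PowerSeries k) = 0 := fdim_eq_zero_of_flat
  have hedim := edim_powerSeries k
  refine ⟨rfl, inferInstance, (isRegularLocalRing'_iff _).mpr inferInstance, hfdQ, hfdk, hedim,
    by norm_num, ?_⟩
  rw [hfdQ, hfdk, hedim]
  norm_num
end

section
/- Let α : (R,m,k) → (R̃,m̃,k̃) be a flat local homomorphism of Noetherian local rings such that m R̃ = m̃ and the residue field extension k → k̃ is separable (i.e., α is a Cohen homomorphism), and let β : (S,n,l) → (S̃,ñ,l̃) be a flat local homomorphism with S̃ complete. Suppose φ : R → S is a local homomorphism and we are given a commutative square of residue field extensions compatible with α, β, φ. Then there exists a local homomorphism φ̃ : R̃ → S̃ with φ̃ ∘ α = β ∘ φ inducing the prescribed map on residue fields. -/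
open IsLocalRing

universe u

/-!
Over the residue fields the extension is separable, hence formally smooth. Flatness of `R → R̃`
propagates this through the square-zero thickenings `R/𝔪ⁿ⁺¹ → R/𝔪ⁿ` (Stacks 031L), so every
`R/𝔪ⁿ → R̃/𝔪ⁿR̃` is formally smooth. This lets us lift `R̃ → S̃/𝔫ⁿ` step by step to a compatible tower of maps,
whose limit in the complete ring `S̃` is the required homomorphism.
-/

open Algebra

theorem Algebra.FormallySmooth.quotient_of_sq_le {R A : Type*} [CommRing R] [CommRing A]
    [Algebra R A] [Module.Flat R A] {J K : Ideal R} (hJK : J ≤ K) (hK : K ^ 2 ≤ J)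
    [FormallySmooth (R ⧸ K) (A ⧸ K.map (algebraMap R A))] :
    FormallySmooth (R ⧸ J) (A ⧸ J.map (algebraMap R A)) := by
  have hflat : (algebraMap (R ⧸ J) (A ⧸ J.map (algebraMap R A))).Flat :=
    RingHom.flat_algebraMap_iff.mpr
      (Module.Flat.of_linearEquiv (TensorProduct.quotIdealMapEquivQuotTensor A J).toLinearEquiv)
  rw [← RingHom.formallySmooth_algebraMap]
  refine RingHom.FormallySmooth.of_flat_of_ker_eq_map_of_square_zero _ hflat
    (Ideal.Quotient.factor hJK) (Ideal.Quotient.factor (Ideal.map_mono hJK))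
    (algebraMap (R ⧸ K) (A ⧸ K.map (algebraMap R A)))
    (Ideal.Quotient.factor_surjective hJK) (Ideal.Quotient.factor_surjective _) ?_ ?_ ?_
    (RingHom.formallySmooth_algebraMap.mpr ‹_›)
  · exact Ideal.Quotient.ringHom_ext (RingHom.ext fun _ ↦ rfl)
  · rw [Ideal.Quotient.factor_ker, ← Ideal.map_pow, ← le_bot_iff, ← Ideal.map_quotient_self J]
    exact Ideal.map_mono hK
  · rw [Ideal.Quotient.factor_ker, Ideal.Quotient.factor_ker, Ideal.map_map, Ideal.map_map]
    rfl

theorem Algebra.FormallySmooth.quotient_pow_succ {R A : Type*} [CommRing R] [CommRing A]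
    [Algebra R A] [Module.Flat R A] (I : Ideal R)
    [FormallySmooth (R ⧸ I) (A ⧸ I.map (algebraMap R A))] (n : ℕ) :
    FormallySmooth (R ⧸ I ^ (n + 1)) (A ⧸ (I ^ (n + 1)).map (algebraMap R A)) := by
  induction n with
  | zero => rw [pow_one]; infer_instance
  | succ n ih =>
    exact quotient_of_sq_le (Ideal.pow_le_pow_right (n + 1).le_succ)
      (by rw [← pow_mul]; exact Ideal.pow_le_pow_right (by lia))

theorem Algebra.FormallySmooth.exists_lift_of_quotient {R A C : Type*} [CommRing R] [CommRing A]
    [CommRing C] [Algebra R A] [Algebra R C] (J : Ideal R)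
    [FormallySmooth (R ⧸ J) (A ⧸ J.map (algebraMap R A))]
    (hC : J.map (algebraMap R C) = ⊥) (N : Ideal C) (hN : IsNilpotent N) (u : A →ₐ[R] C ⧸ N) :
    ∃ w : A →ₐ[R] C, (Ideal.Quotient.mkₐ R N).comp w = u := by
  have hJ : J ≤ RingHom.ker (algebraMap R C) := fun x hx ↦ by
    simpa [hC] using Ideal.mem_map_of_mem (algebraMap R C) hx
  let : Algebra (R ⧸ J) C := (Ideal.Quotient.lift J (algebraMap R C) hJ).toAlgebra
  have : IsScalarTower R (R ⧸ J) C := IsScalarTower.of_algebraMap_eq fun _ ↦ rfl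
  have hu : (J.map (algebraMap R A)).map (u : A →+* C ⧸ N) = ⊥ := by
    rw [Ideal.map_map, u.comp_algebraMap, IsScalarTower.algebraMap_eq R C (C ⧸ N),
      ← Ideal.map_map, hC, Ideal.map_bot]
  let u' : A ⧸ J.map (algebraMap R A) →ₐ[R ⧸ J] C ⧸ N :=
    (Ideal.Quotient.liftₐ _ u fun a ha ↦ by
      simpa [hu] using Ideal.mem_map_of_mem (u : A →+* C ⧸ N) ha).extendScalarsOfSurjective
      Ideal.Quotient.mk_surjective
  refine ⟨((FormallySmooth.lift N hN u').restrictScalars R).comp (Ideal.Quotient.mkₐ R _), ?_⟩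
  ext a
  exact FormallySmooth.mk_lift N hN u' _

theorem IsAdicComplete.exists_mkₐ_comp_eq_of_lift_succ {R A S : Type*} [CommRing R] [CommRing A]
    [CommRing S] [Algebra R A] [Algebra R S] (N : Ideal S) [IsAdicComplete N S]
    (hlift : ∀ (n : ℕ) (v : A →ₐ[R] S ⧸ N ^ (n + 1)), ∃ w : A →ₐ[R] S ⧸ N ^ (n + 2),
      (Ideal.Quotient.factorₐ R (Ideal.pow_le_pow_right (n + 1).le_succ)).comp w = v)
    (f : A →ₐ[R] S ⧸ N) : ∃ g : A →ₐ[R] S, (Ideal.Quotient.mkₐ R N).comp g = f := by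
  let F (n : ℕ) : A →ₐ[R] S ⧸ N ^ (n + 1) :=
    Nat.rec ((Ideal.Quotient.factorₐ R (pow_one N).ge).comp f) (fun n v ↦ (hlift n v).choose) n
  have hF (n : ℕ) : (Ideal.Quotient.factorₐ R _).comp (F (n + 1)) = F n :=
    (hlift n (F n)).choose_spec
  let G (n : ℕ) : A →ₐ[R] S ⧸ N ^ n :=
    (Ideal.Quotient.factorₐ R (Ideal.pow_le_pow_right n.le_succ)).comp (F n)
  have hG_succ (n : ℕ) :
      (Ideal.Quotient.factorₐ R (Ideal.pow_le_pow_right n.le_succ)).comp (G (n + 1)) = G n := by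
    dsimp only [G]
    rw [hF]
  have hF_zero : F 0 = (Ideal.Quotient.factorₐ R (pow_one N).ge).comp f := rfl
  have hG_one : (Ideal.Quotient.factorₐ R (pow_one N).le).comp (G 1) = f := by
    change (Ideal.Quotient.factorₐ R _).comp ((Ideal.Quotient.factorₐ R _).comp (F (0 + 1))) = f
    rw [hF 0, hF_zero, ← AlgHom.comp_assoc, Ideal.Quotient.factorₐ_comp,
      Ideal.Quotient.factorₐ_refl, AlgHom.id_comp]
  clear_value G
  have hG {m n : ℕ} (hmn : m ≤ n) :
      (Ideal.Quotient.factorₐ R (Ideal.pow_le_pow_right hmn)).comp (G n) = G m := by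
    induction n, hmn using Nat.le_induction with
    | base => rw [Ideal.Quotient.factorₐ_refl, AlgHom.id_comp]
    | succ n hmn ih =>
      rw [← ih, ← hG_succ n, ← AlgHom.comp_assoc, Ideal.Quotient.factorₐ_comp]
  refine ⟨IsAdicComplete.liftAlgHom N G hG, ?_⟩
  rw [← hG_one, ← Ideal.Quotient.factorₐ_comp_mk R (pow_one N).le, AlgHom.comp_assoc,
    IsAdicComplete.mkₐ_comp_liftAlgHom]

theorem Algebra.FormallySmooth.exists_mkₐ_comp_eq_of_quotient_pow {R A S : Type*} [CommRing R]
    [CommRing A] [CommRing S] [Algebra R A] [Algebra R S] (I : Ideal R) (N : Ideal S)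
    [IsAdicComplete N S] (hIN : I.map (algebraMap R S) ≤ N)
    (hsmooth : ∀ n : ℕ, FormallySmooth (R ⧸ I ^ (n + 1)) (A ⧸ (I ^ (n + 1)).map (algebraMap R A)))
    (f : A →ₐ[R] S ⧸ N) : ∃ g : A →ₐ[R] S, (Ideal.Quotient.mkₐ R N).comp g = f := by
  refine IsAdicComplete.exists_mkₐ_comp_eq_of_lift_succ N (fun n v ↦ ?_) f
  have hle : N ^ (n + 2) ≤ N ^ (n + 1) := Ideal.pow_le_pow_right (n + 1).le_succ
  let e := DoubleQuot.quotQuotEquivQuotOfLEₐ R hle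
  have hkill : (I ^ (n + 2)).map (algebraMap R (S ⧸ N ^ (n + 2))) = ⊥ := by
    rw [IsScalarTower.algebraMap_eq R S, ← Ideal.map_map, Ideal.map_pow, ← le_bot_iff,
      ← Ideal.map_quotient_self (N ^ (n + 2))]
    exact Ideal.map_mono (Ideal.pow_right_mono hIN _)
  have hsq : ((N ^ (n + 1)).map (Ideal.Quotient.mkₐ R (N ^ (n + 2)))) ^ 2 = ⊥ := by
    rw [← Ideal.map_pow, ← pow_mul, ← le_bot_iff, ← Ideal.map_quotient_self (N ^ (n + 2))]
    exact Ideal.map_mono (Ideal.pow_le_pow_right (by lia))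
  have := hsmooth (n + 1)
  obtain ⟨w, hw⟩ := exists_lift_of_quotient (I ^ (n + 2)) hkill _ ⟨2, hsq⟩
    (e.symm.toAlgHom.comp v)
  refine ⟨w, ?_⟩
  rw [← DoubleQuot.quotQuotEquivQuotOfLEₐ_comp_mkₐ, AlgHom.comp_assoc, hw, ← AlgHom.comp_assoc,
    AlgEquiv.comp_symm, AlgHom.id_comp]

theorem IsLocalRing.formallySmooth_quotient_map_maximalIdeal {R A : Type*} [CommRing R] [CommRing A]
    [IsLocalRing R] [IsLocalRing A] [Algebra R A] [IsLocalHom (algebraMap R A)]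
    (hfiber : (maximalIdeal R).map (algebraMap R A) = maximalIdeal A)
    [Algebra.IsSeparable (ResidueField R) (ResidueField A)] :
    FormallySmooth (R ⧸ maximalIdeal R) (A ⧸ (maximalIdeal R).map (algebraMap R A)) := by
  have : FormallyEtale (ResidueField R) (ResidueField A) := FormallyEtale.of_isSeparable _ _
  let : Algebra (ResidueField R) (A ⧸ (maximalIdeal R).map (algebraMap R A)) :=
    Ideal.Quotient.algebraQuotientMapQuotient
  exact FormallySmooth.of_equiv (R := ResidueField R) (A := ResidueField A)
    (AlgEquiv.ofRingEquiv (f := Ideal.quotEquivOfEq hfiber.symm) fun x ↦ by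
      obtain ⟨r, rfl⟩ := residue_surjective x
      rfl)

theorem stmt18_general (R Rt S St : Type u) [CommRing R] [CommRing Rt] [CommRing S] [CommRing St]
    [IsLocalRing R] [IsLocalRing Rt] [IsLocalRing S] [IsLocalRing St]
    (α : R →+* Rt) (β : S →+* St) (φ : R →+* S)
    [IsLocalHom α] [IsLocalHom β] [IsLocalHom φ]
    (hαflat : @Module.Flat R Rt _ _ (Module.compHom Rt α))
    (hfiber : (maximalIdeal R).map α = maximalIdeal Rt)
    (hsep : letI := (ResidueField.map α).toAlgebra
      Algebra.IsSeparable (ResidueField R) (ResidueField Rt))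
    [IsAdicComplete (maximalIdeal St) St]
    (ψ₀ : ResidueField Rt →+* ResidueField St)
    (hψ₀ : ψ₀.comp (ResidueField.map α) = (ResidueField.map β).comp (ResidueField.map φ)) :
    ∃ (φt : Rt →+* St) (_ : IsLocalHom φt),
      φt.comp α = β.comp φ ∧ ResidueField.map φt = ψ₀ := by
  let : Algebra R Rt := α.toAlgebra
  let : Algebra R St := (β.comp φ).toAlgebra
  have : Module.Flat R Rt := hαflat
  have : Algebra.IsSeparable (ResidueField R) (ResidueField Rt) := by
    convert hsep
    exact Algebra.algebra_ext _ _ fun x ↦ by obtain ⟨r, rfl⟩ := residue_surjective x; rfl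
  have := formallySmooth_quotient_map_maximalIdeal hfiber
  let f : Rt →ₐ[R] St ⧸ maximalIdeal St :=
    { toRingHom := ψ₀.comp (residue Rt)
      commutes' := fun r ↦ congr($hψ₀ (residue R r)) }
  obtain ⟨g, hg⟩ := FormallySmooth.exists_mkₐ_comp_eq_of_quotient_pow (maximalIdeal R)
    (maximalIdeal St) (map_maximalIdeal_le (β.comp φ)) (FormallySmooth.quotient_pow_succ _) f
  have hres : (residue St).comp (g : Rt →+* St) = ψ₀.comp (residue Rt) := congr(($hg).toRingHom)
  have : IsLocalHom ((residue St).comp (g : Rt →+* St)) := by rw [hres]; infer_instance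
  have := isLocalHom_of_comp (g : Rt →+* St) (residue St)
  refine ⟨g, this, g.comp_algebraMap, ?_⟩
  ext x
  obtain ⟨x, rfl⟩ := residue_surjective x
  exact congr($hres x)

/-- lifting along a Cohen homomorphism: given `α : R → R̃` Cohen,
`β : S → S̃` flat local with `S̃` complete, `φ : R → S` local, and a compatible square of
residue field maps, there is `φ̃ : R̃ → S̃` with `φ̃ ∘ α = β ∘ φ` inducing the prescribed
residue field map. -/
theorem stmt18 (R Rt S St : Type u) [CommRing R] [CommRing Rt] [CommRing S] [CommRing St]
    [IsLocalRing R] [IsLocalRing Rt] [IsLocalRing S] [IsLocalRing St]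
    [IsNoetherianRing R] [IsNoetherianRing Rt] [IsNoetherianRing S] [IsNoetherianRing St]
    (α : R →+* Rt) (β : S →+* St) (φ : R →+* S)
    [IsLocalHom α] [IsLocalHom β] [IsLocalHom φ]
    (hαflat : @Module.Flat R Rt _ _ (Module.compHom Rt α))
    (hfiber : (maximalIdeal R).map α = maximalIdeal Rt)
    (hsep : letI := (ResidueField.map α).toAlgebra
      Algebra.IsSeparable (ResidueField R) (ResidueField Rt))
    (hβflat : @Module.Flat S St _ _ (Module.compHom St β))
    [IsAdicComplete (maximalIdeal St) St]
    (ψ₀ : ResidueField Rt →+* ResidueField St)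
    (hψ₀ : ψ₀.comp (ResidueField.map α) = (ResidueField.map β).comp (ResidueField.map φ)) :
    ∃ (φt : Rt →+* St) (_ : IsLocalHom φt),
      φt.comp α = β.comp φ ∧ ResidueField.map φt = ψ₀ :=
  stmt18_general R Rt S St α β φ hαflat hfiber hsep ψ₀ hψ₀
end
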